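/- arXiv:1002.4262 — 2 statements merged into one kernel-verified Lean document; each statement's English description precedes it below -/
import Mathlib

section
/- Let U ⊆ ℂ be an open set and let (f_k) be a sequence of injective holomorphic functions f_k : U → ℂ converging locally uniformly to an injective holomorphic function f. Then every compact subset K of f(U) is eventually contained in f_k(U), i.e. there exists m such that K ⊆ f_k(U) for all k ≥ m. -/
/-!
Pick `z₀ ∈ U` and a circle `|z - z₀| = r` inside `U`. Injectivity of `F` bounds `|F z - F z₀|`
below by some `ε > 0` on the circle, and uniform convergence on the closed disk transfers this bound
(up to `ε / 4`) to `f k` for large `k`. The minimum modulus principle, in the form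
`DiffContOnCl.ball_subset_image_closedBall`, then puts a fixed disk around `F z₀` inside every
`f k '' U` with `k` large; a compact `K ⊆ F '' U` is covered by finitely many such disks.
-/

open Metric Set Filter Topology

theorem frequently_ne_of_injOn {X Y : Type*} [TopologicalSpace X] {g : X → Y} {U : Set X}
    {x : X} [(𝓝[≠] x).NeBot] (hg : InjOn g U) (hU : U ∈ 𝓝 x) :
    ∃ᶠ y in 𝓝 x, g y ≠ g x := by
  have : ∀ᶠ y in 𝓝[≠] x, g y ≠ g x := by
    filter_upwards [nhdsWithin_le_nhds hU, self_mem_nhdsWithin] with y hy hyx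
    exact fun h => hyx (hg hy (mem_of_mem_nhds hU) h)
  exact this.frequently.filter_mono nhdsWithin_le_nhds

theorem IsCompact.eventually_subset_of_forall_exists_mem_nhds {X ι : Type*} [TopologicalSpace X]
    {K : Set X} {l : Filter ι} {S : ι → Set X} (hK : IsCompact K)
    (hS : ∀ x ∈ K, ∃ t ∈ 𝓝 x, ∀ᶠ i in l, t ⊆ S i) :
    ∀ᶠ i in l, K ⊆ S i := by
  refine hK.induction_on (p := fun s => ∀ᶠ i in l, s ⊆ S i)
    (Eventually.of_forall fun _ => empty_subset _)
    (fun _ _ hst ht => ht.mono fun _ h => hst.trans h)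
    (fun _ _ hs ht => (hs.and ht).mono fun _ h => union_subset h.1 h.2) fun x hx => ?_
  obtain ⟨t, ht, hS⟩ := hS x hx
  exact ⟨t, mem_nhdsWithin_of_mem_nhds ht, hS⟩

theorem DiffContOnCl.ball_subset_image_closedBall_of_dist_lt {g G : ℂ → ℂ} {z₀ : ℂ} {r ε : ℝ}
    (hg : DiffContOnCl ℂ g (ball z₀ r)) (hr : 0 < r)
    (hG : ∀ z ∈ sphere z₀ r, ε ≤ ‖G z - G z₀‖)
    (hgG : ∀ z ∈ closedBall z₀ r, dist (G z) (g z) < ε / 8)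
    (hz₀ : ∃ᶠ z in 𝓝 z₀, g z ≠ g z₀) :
    ball (G z₀) (ε / 4) ⊆ g '' closedBall z₀ r := by
  have hcenter := hgG z₀ (mem_closedBall_self hr.le)
  have hsphere : ∀ z ∈ sphere z₀ r, 3 * ε / 4 ≤ ‖g z - g z₀‖ := by
    intro z hz
    have hz' := hgG z (sphere_subset_closedBall hz)
    rw [dist_eq_norm] at hz' hcenter
    have : G z - G z₀ = (g z - g z₀) + (G z - g z) - (G z₀ - g z₀) := by ring
    linarith [hG z hz, this ▸ norm_sub_le (g z - g z₀ + (G z - g z)) (G z₀ - g z₀),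
      norm_add_le (g z - g z₀) (G z - g z)]
  refine (ball_subset_ball' ?_).trans (hg.ball_subset_image_closedBall hr hsphere hz₀)
  linarith

theorem TendstoLocallyUniformlyOn.exists_ball_eventually_subset_image {U : Set ℂ}
    {f : ℕ → ℂ → ℂ} {F : ℂ → ℂ} (hconv : TendstoLocallyUniformlyOn f F atTop U) (hU : IsOpen U)
    (hf_hol : ∀ k, DifferentiableOn ℂ (f k) U) (hf_inj : ∀ k, InjOn (f k) U)
    (hF_cont : ContinuousOn F U) (hF_inj : InjOn F U) {z₀ : ℂ} (hz₀ : z₀ ∈ U) :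
    ∃ ε > 0, ∀ᶠ k in atTop, ball (F z₀) ε ⊆ f k '' U := by
  obtain ⟨r, hr, hrU⟩ := nhds_basis_closedBall.mem_iff.1 (hU.mem_nhds hz₀)
  have hsphere : sphere z₀ r ⊆ U := sphere_subset_closedBall.trans hrU
  obtain ⟨x, hx, hmin⟩ := (isCompact_sphere z₀ r).exists_isMinOn
    (NormedSpace.sphere_nonempty.2 hr.le)
    (((hF_cont.mono hsphere).sub continuousOn_const).norm)
  set ε := ‖F x - F z₀‖
  have hε : 0 < ε := norm_sub_pos_iff.2 fun h =>
    ne_of_mem_sphere hx hr.ne' (hF_inj (hsphere hx) hz₀ h)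
  refine ⟨ε / 4, by positivity, ?_⟩
  have huc : TendstoUniformlyOn f F atTop (closedBall z₀ r) :=
    (tendstoLocallyUniformlyOn_iff_forall_isCompact hU).1 hconv _ hrU (isCompact_closedBall z₀ r)
  filter_upwards [Metric.tendstoUniformlyOn_iff.1 huc (ε / 8) (by positivity)] with k hk
  have hdiff : DiffContOnCl ℂ (f k) (ball z₀ r) :=
    (hf_hol k).diffContOnCl_ball hrU
  exact (hdiff.ball_subset_image_closedBall_of_dist_lt hr (fun z hz => hmin hz) hk
    (frequently_ne_of_injOn (hf_inj k) (hU.mem_nhds hz₀))).trans (image_mono hrU)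

/-- One-variable case: if injective holomorphic functions `f_k : U → ℂ` converge locally
uniformly to an injective holomorphic `f`, then every compact `K ⊆ f(U)` is eventually
contained in `f_k(U)`. -/
theorem stmt2 {U : Set ℂ} (hU : IsOpen U)
    (f : ℕ → ℂ → ℂ) (F : ℂ → ℂ)
    (hf_hol : ∀ k, DifferentiableOn ℂ (f k) U)
    (hf_inj : ∀ k, Set.InjOn (f k) U)
    (hF_hol : DifferentiableOn ℂ F U)
    (hF_inj : Set.InjOn F U)
    (hconv : TendstoLocallyUniformlyOn f F atTop U)
    (K : Set ℂ) (hK : IsCompact K) (hKF : K ⊆ F '' U) :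
    ∃ m : ℕ, ∀ k ≥ m, K ⊆ f k '' U := by
  refine eventually_atTop.1 (hK.eventually_subset_of_forall_exists_mem_nhds fun w hw => ?_)
  obtain ⟨z, hz, rfl⟩ := hKF hw
  obtain ⟨ε, hε, hball⟩ := hconv.exists_ball_eventually_subset_image hU hf_hol hf_inj
    hF_hol.continuousOn hF_inj hz
  exact ⟨ball (F z) ε, ball_mem_nhds _ hε, hball⟩
end

section
/- Let (φ_{s,t}) be a family of injective holomorphic self-maps of the unit disc 𝔻 satisfying the evolution property, and define Φ_{s,t} : 𝔹ⁿ → ℂⁿ by Φ_{s,t}(z₁, z̃) = (φ_{s,t}(z₁), z̃ e^{(s−t)/2} √(φ_{s,t}'(z₁))), where a holomorphic branch of the square root of φ_{s,t}' is chosen. Then for every z = (z₁, z̃) ∈ 𝔹ⁿ and t ≥ s ≥ 0, ‖Φ_{s,t}(z)‖ < 1; that is, Φ_{s,t} maps 𝔹ⁿ into 𝔹ⁿ. -/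
/-!
Schwarz–Pick gives `|φ'(z₁)| (1 - |z₁|²) ≤ 1 - |φ(z₁)|²`, and `|√φ'(z₁)|² = |φ'(z₁)|`, so
`‖Φ_{s,t}(z)‖² = |φ(z₁)|² + e^{s-t} |φ'(z₁)| ‖z̃‖² < |φ(z₁)|² + |φ'(z₁)| (1 - |z₁|²) ≤ 1`
(the middle step is strict unless `φ'(z₁) = 0`, in which case `|φ(z₁)| < 1` suffices).
Schwarz–Pick itself is the Schwarz lemma applied to `φ` composed with by the disc automorphisms
`z ↦ (z + a) / (1 + ā z)` sending `0` to `z₁` and `φ(z₁)` to `0`.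
-/

open Metric Set ComplexConjugate

noncomputable def discMobius (a z : ℂ) : ℂ := (z + a) / (1 + conj a * z)

lemma normSq_one_add_conj_mul_sub_normSq_add (a z : ℂ) :
    Complex.normSq (1 + conj a * z) - Complex.normSq (z + a) =
      (1 - Complex.normSq a) * (1 - Complex.normSq z) := by
  simp only [Complex.normSq_apply, Complex.add_re, Complex.add_im, Complex.mul_re,
    Complex.mul_im, Complex.one_re, Complex.one_im, Complex.conj_re, Complex.conj_im]
  ring

lemma normSq_add_lt_normSq_one_add_conj_mul {a z : ℂ} (ha : ‖a‖ < 1) (hz : ‖z‖ < 1) :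
    Complex.normSq (z + a) < Complex.normSq (1 + conj a * z) := by
  have hpos : 0 < (1 - Complex.normSq a) * (1 - Complex.normSq z) := by
    rw [← Complex.sq_norm, ← Complex.sq_norm]
    exact mul_pos (by nlinarith [norm_nonneg a]) (by nlinarith [norm_nonneg z])
  linarith [normSq_one_add_conj_mul_sub_normSq_add a z]

lemma one_add_conj_mul_ne_zero {a z : ℂ} (ha : ‖a‖ < 1) (hz : ‖z‖ < 1) :
    1 + conj a * z ≠ 0 := by
  intro h
  have := normSq_add_lt_normSq_one_add_conj_mul ha hz
  rw [h, map_zero] at this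
  exact (Complex.normSq_nonneg _).not_gt this

lemma mapsTo_discMobius {a : ℂ} (ha : ‖a‖ < 1) :
    MapsTo (discMobius a) (ball 0 1) (ball 0 1) := by
  intro z hz
  rw [mem_ball_zero_iff] at hz ⊢
  have hlt := normSq_add_lt_normSq_one_add_conj_mul ha hz
  rw [discMobius, norm_div, div_lt_one (norm_pos_iff.2 (one_add_conj_mul_ne_zero ha hz)),
    ← sq_lt_sq₀ (norm_nonneg _) (norm_nonneg _), Complex.sq_norm, Complex.sq_norm]
  exact hlt

lemma hasDerivAt_discMobius {a z : ℂ} (hz : 1 + conj a * z ≠ 0) :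
    HasDerivAt (discMobius a) ((1 - (‖a‖ : ℂ) ^ 2) / (1 + conj a * z) ^ 2) z := by
  have hnum : HasDerivAt (fun w : ℂ => w + a) 1 z := (hasDerivAt_id z).add_const a
  have hden : HasDerivAt (fun w : ℂ => 1 + conj a * w) (conj a) z := by
    simpa using ((hasDerivAt_id z).const_mul (conj a)).const_add 1
  refine (hnum.div hden hz).congr_deriv ?_
  rw [← Complex.mul_conj']
  ring

lemma differentiableOn_discMobius {a : ℂ} (ha : ‖a‖ < 1) :
    DifferentiableOn ℂ (discMobius a) (ball 0 1) := fun _ hz =>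
  (hasDerivAt_discMobius (one_add_conj_mul_ne_zero ha (mem_ball_zero_iff.1 hz)))
    |>.differentiableAt.differentiableWithinAt

lemma discMobius_zero (a : ℂ) : discMobius a 0 = a := by
  simp [discMobius]

lemma discMobius_neg_self (b : ℂ) : discMobius (-b) b = 0 := by
  simp [discMobius]

lemma hasDerivAt_discMobius_zero (a : ℂ) :
    HasDerivAt (discMobius a) ((1 - ‖a‖ ^ 2 : ℝ) : ℂ) 0 := by
  convert hasDerivAt_discMobius (a := a) (z := 0) (by simp) using 1
  push_cast
  ring

lemma hasDerivAt_discMobius_neg_self {b : ℂ} (hb : ‖b‖ < 1) :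
    HasDerivAt (discMobius (-b)) ((1 - ‖b‖ ^ 2 : ℝ)⁻¹ : ℝ) b := by
  have hden : 1 + conj (-b) * b = ((1 - ‖b‖ ^ 2 : ℝ) : ℂ) := by
    rw [map_neg, neg_mul, mul_comm, Complex.mul_conj']
    push_cast
    ring
  have hne : ((1 - ‖b‖ ^ 2 : ℝ) : ℂ) ≠ 0 := by
    exact_mod_cast (by nlinarith [norm_nonneg b] : (1 - ‖b‖ ^ 2 : ℝ) ≠ 0)
  convert hasDerivAt_discMobius (a := -b) (z := b) (hden ▸ hne) using 1
  rw [hden, norm_neg]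
  push_cast at hne ⊢
  field_simp

/-- The Schwarz–Pick lemma. -/
theorem norm_deriv_mul_le_of_mapsTo_unitBall {f : ℂ → ℂ} (hd : DifferentiableOn ℂ f (ball 0 1))
    (hf : MapsTo f (ball 0 1) (ball 0 1)) {a : ℂ} (ha : a ∈ ball (0 : ℂ) 1) :
    ‖deriv f a‖ * (1 - ‖a‖ ^ 2) ≤ 1 - ‖f a‖ ^ 2 := by
  have ha' : ‖a‖ < 1 := mem_ball_zero_iff.1 ha
  have hb : ‖f a‖ < 1 := mem_ball_zero_iff.1 (hf ha)
  have hb' : ‖-f a‖ < 1 := by rwa [norm_neg]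
  set g := discMobius (-f a) ∘ f ∘ discMobius a
  have hg_maps : MapsTo g (ball 0 1) (ball 0 1) :=
    (mapsTo_discMobius hb').comp (hf.comp (mapsTo_discMobius ha'))
  have hg_diff : DifferentiableOn ℂ g (ball 0 1) :=
    (differentiableOn_discMobius hb').comp
      (hd.comp (differentiableOn_discMobius ha') (mapsTo_discMobius ha'))
      (hf.comp (mapsTo_discMobius ha'))
  have hg0 : g 0 = 0 := by
    simp only [g, Function.comp_apply, discMobius_zero, discMobius_neg_self]
  have hf_deriv : HasDerivAt f (deriv f a) (discMobius a 0) := by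
    rw [discMobius_zero]
    exact (hd.differentiableAt (isOpen_ball.mem_nhds ha)).hasDerivAt
  have hmid : HasDerivAt (discMobius (-f a)) ((1 - ‖f a‖ ^ 2 : ℝ)⁻¹ : ℝ)
      ((f ∘ discMobius a) 0) := by
    simpa [discMobius_zero] using hasDerivAt_discMobius_neg_self hb
  have hg_deriv := hmid.comp 0 (hf_deriv.comp 0 (hasDerivAt_discMobius_zero a))
  have hschwarz : ‖deriv g 0‖ ≤ 1 :=
    Complex.norm_deriv_le_one_of_mapsTo_ball hg_diff
      (by rw [hg0]; exact hg_maps.mono_right ball_subset_closedBall) one_pos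
  have hpos_a : 0 ≤ 1 - ‖a‖ ^ 2 := by nlinarith [norm_nonneg a]
  have hpos_b : 0 < 1 - ‖f a‖ ^ 2 := by nlinarith [norm_nonneg (f a)]
  rwa [hg_deriv.deriv, norm_mul, norm_mul, Complex.norm_of_nonneg (inv_nonneg.2 hpos_b.le),
    Complex.norm_of_nonneg hpos_a, inv_mul_le_iff₀ hpos_b, mul_one] at hschwarz

theorem stmt11_general {m : ℕ} (φ : ℝ → ℝ → ℂ → ℂ) (σ : ℝ → ℝ → ℂ → ℂ)
    (hφ_maps : ∀ s t : ℝ, 0 ≤ s → s ≤ t → Set.MapsTo (φ s t) (ball (0:ℂ) 1) (ball (0:ℂ) 1))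
    (hφ_hol : ∀ s t : ℝ, 0 ≤ s → s ≤ t → DifferentiableOn ℂ (φ s t) (ball (0:ℂ) 1))
    (hσ : ∀ s t : ℝ, 0 ≤ s → s ≤ t → ∀ z ∈ ball (0:ℂ) 1, (σ s t z) ^ 2 = deriv (φ s t) z)
    (s t : ℝ) (hs : 0 ≤ s) (hst : s ≤ t)
    (z₁ : ℂ) (zt : EuclideanSpace ℂ (Fin m))
    (hz : ‖z₁‖ ^ 2 + ‖zt‖ ^ 2 < 1) :
    ‖φ s t z₁‖ ^ 2 +
      ‖(((Real.exp ((s - t) / 2) : ℝ) : ℂ) * σ s t z₁) • zt‖ ^ 2 < 1 := by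
  have hz₁ : z₁ ∈ ball (0 : ℂ) 1 := mem_ball_zero_iff.2 <| by nlinarith [norm_nonneg z₁]
  have hφz₁ : ‖φ s t z₁‖ < 1 := mem_ball_zero_iff.1 (hφ_maps s t hs hst hz₁)
  have hpick := norm_deriv_mul_le_of_mapsTo_unitBall (hφ_hol s t hs hst) (hφ_maps s t hs hst) hz₁
  have hnorm : ‖(((Real.exp ((s - t) / 2) : ℝ) : ℂ) * σ s t z₁) • zt‖ ^ 2 =
      Real.exp (s - t) * (‖deriv (φ s t) z₁‖ * ‖zt‖ ^ 2) := by
    rw [← hσ s t hs hst z₁ hz₁, norm_smul, norm_mul, Complex.norm_of_nonneg (Real.exp_pos _).le,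
      mul_pow, mul_pow, ← Real.exp_nat_mul, norm_pow]
    ring_nf
  have hexp : Real.exp (s - t) ≤ 1 := Real.exp_le_one_iff.2 (by linarith)
  have hdz : ‖deriv (φ s t) z₁‖ * ‖zt‖ ^ 2 < 1 - ‖φ s t z₁‖ ^ 2 := by
    rcases (norm_nonneg (deriv (φ s t) z₁)).eq_or_lt with h | h
    · rw [← h, zero_mul]; nlinarith [norm_nonneg (φ s t z₁)]
    · nlinarith
  rw [hnorm]
  nlinarith [mul_nonneg (norm_nonneg (deriv (φ s t) z₁)) (sq_nonneg ‖zt‖)]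

/-- The Roper–Suffridge type maps `Φ_{s,t}(z₁,z̃) = (φ_{s,t}(z₁), z̃ e^{(s-t)/2}√(φ_{s,t}'(z₁)))`
associated with an evolution family `(φ_{s,t})` of injective holomorphic self-maps of the
unit disc map the unit ball `𝔹ⁿ = {(z₁,z̃) : |z₁|² + ‖z̃‖² < 1}` into itself.
Here `σ s t` is a holomorphic branch of the square root of `φ_{s,t}'`. -/
theorem stmt11 {m : ℕ} (φ : ℝ → ℝ → ℂ → ℂ) (σ : ℝ → ℝ → ℂ → ℂ)
    (hφ_maps : ∀ s t : ℝ, 0 ≤ s → s ≤ t → Set.MapsTo (φ s t) (ball (0:ℂ) 1) (ball (0:ℂ) 1))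
    (hφ_hol : ∀ s t : ℝ, 0 ≤ s → s ≤ t → DifferentiableOn ℂ (φ s t) (ball (0:ℂ) 1))
    (hφ_inj : ∀ s t : ℝ, 0 ≤ s → s ≤ t → Set.InjOn (φ s t) (ball (0:ℂ) 1))
    (hφ_id : ∀ s : ℝ, 0 ≤ s → ∀ z ∈ ball (0:ℂ) 1, φ s s z = z)
    (hφ_comp : ∀ s u t : ℝ, 0 ≤ s → s ≤ u → u ≤ t →
      ∀ z ∈ ball (0:ℂ) 1, φ s t z = φ u t (φ s u z))
    (hσ_hol : ∀ s t : ℝ, 0 ≤ s → s ≤ t → DifferentiableOn ℂ (σ s t) (ball (0:ℂ) 1))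
    (hσ : ∀ s t : ℝ, 0 ≤ s → s ≤ t → ∀ z ∈ ball (0:ℂ) 1, (σ s t z) ^ 2 = deriv (φ s t) z)
    (s t : ℝ) (hs : 0 ≤ s) (hst : s ≤ t)
    (z₁ : ℂ) (zt : EuclideanSpace ℂ (Fin m))
    (hz : ‖z₁‖ ^ 2 + ‖zt‖ ^ 2 < 1) :
    ‖φ s t z₁‖ ^ 2 +
      ‖(((Real.exp ((s - t) / 2) : ℝ) : ℂ) * σ s t z₁) • zt‖ ^ 2 < 1 :=
  stmt11_general φ σ hφ_maps hφ_hol hσ s t hs hst z₁ zt hz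
end
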